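/- arXiv:1212.1170 — 2 statements merged into one kernel-verified Lean document; each statement's English description precedes it below -/
import Mathlib

section
/- Let a ≥ 0, l ≥ 1, e ≥ a + l and 0 ≤ r ≤ l be integers, and let λ = (λ_1 ≤ ... ≤ λ_l) be a partition of length l whose largest term is at most m+1. Let Φ be the (a+l) × e matrix over R with Φ_{ii} = 1 for 1 ≤ i ≤ a, Φ_{(a+i)(a+i)} = x^{λ_i} for 1 ≤ i ≤ l, and all other entries 0. Then all minors of Φ of size a + l − r (i.e., the determinants of all (a+l−r) × (a+l−r) submatrices obtained by choosing a+l−r rows and a+l−r columns) vanish in R if and only if λ_1 + λ_2 + ... + λ_{l−r} ≥ m + 1. -/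
open Finset Polynomial

/-- The truncated polynomial ring `R = k[X]/(X^(m+1))`. -/
abbrev TruncR (k : Type*) [Field k] (m : ℕ) : Type _ :=
  Polynomial k ⧸ Ideal.span {(Polynomial.X : Polynomial k) ^ (m + 1)}

/-- The image `x` of `X` in `R = k[X]/(X^(m+1))`. -/
noncomputable def truncX (k : Type*) [Field k] (m : ℕ) : TruncR k m :=
  Ideal.Quotient.mk _ (Polynomial.X : Polynomial k)

lemma truncX_pow_eq_zero_iff (k : Type*) [Field k] (m n : ℕ) :
    truncX k m ^ n = 0 ↔ m + 1 ≤ n := by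
  rw [truncX, ← map_pow, Ideal.Quotient.eq_zero_iff_mem, Ideal.mem_span_singleton]
  constructor
  · intro h
    by_contra hn
    push_neg at hn
    rw [Polynomial.X_pow_dvd_iff] at h
    have := h n hn
    simp [Polynomial.coeff_X_pow] at this
  · intro h
    exact pow_dvd_pow _ h

lemma fin_strictMono_id {n : ℕ} {f : Fin n → Fin n} (hf : StrictMono f) : f = id := by
  haveI : WellFoundedLT (Fin n) := inferInstance
  have hsurj : Function.Surjective f := Finite.surjective_of_injective hf.injective
  have := @StrictMono.range_inj (Fin n) (Fin n) _ _ _ f id hf strictMono_id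
  refine this.1 ?_
  simp [Set.range_eq_univ.mpr hsurj, Set.range_id]

lemma fin_strictMono_le {n N : ℕ} {f : Fin n → Fin N} (hf : StrictMono f) (t : Fin n) :
    (t : ℕ) ≤ (f t : ℕ) := by
  obtain ⟨t, ht⟩ := t
  simp only [Fin.val_mk] at *
  induction t with
  | zero => exact Nat.zero_le _
  | succ i ih =>
    have h' : i < n := Nat.lt_of_succ_lt ht
    have h1 : i ≤ (f ⟨i, h'⟩ : ℕ) := by simpa using ih h'
    have h2 : f ⟨i, h'⟩ < f ⟨i + 1, ht⟩ := hf (by simp [Fin.lt_def])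
    have h3 := Fin.lt_def.mp h2
    omega

/-- Let `Φ` be the `(a+l) × e` matrix over `R = k[X]/(X^{m+1})` whose first `a` diagonal
entries are `1`, whose next `l` diagonal entries are `x^{λ_1}, ..., x^{λ_l}` (where
`λ_1 ≤ ... ≤ λ_l` is a partition with parts at most `m+1`, indexed by `1, ..., l`), and whose
other entries vanish.  Then all the minors of `Φ` of size `a + l - r` vanish if and only if
`λ_1 + ... + λ_{l-r} ≥ m + 1`. -/
theorem minors_vanish_iff (k : Type*) [Field k] (m : ℕ) (a l e r : ℕ) (hl : 1 ≤ l)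
    (he : a + l ≤ e) (hr : r ≤ l)
    (lam : ℕ → ℕ) (hmono : ∀ i j, 1 ≤ i → i ≤ j → j ≤ l → lam i ≤ lam j)
    (hpos : ∀ i ∈ Finset.Icc 1 l, 1 ≤ lam i) (hle : ∀ i ∈ Finset.Icc 1 l, lam i ≤ m + 1)
    (Φ : Matrix (Fin (a + l)) (Fin e) (TruncR k m))
    (hΦ : ∀ (i : Fin (a + l)) (j : Fin e), Φ i j =
      if (j : ℕ) = (i : ℕ) then
        (if (i : ℕ) < a then 1 else truncX k m ^ lam ((i : ℕ) - a + 1))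
      else 0) :
    (∀ (ρ : Fin (a + l - r) → Fin (a + l)) (σ : Fin (a + l - r) → Fin e),
        StrictMono ρ → StrictMono σ → (Φ.submatrix ρ σ).det = 0) ↔
      m + 1 ≤ ∑ i ∈ Finset.Icc 1 (l - r), lam i := by
  set s := a + l - r with hs
  set w : ℕ → ℕ := fun i => if i < a then 0 else lam (i - a + 1) with hw
  -- entries in terms of w
  have hentry : ∀ (i : Fin (a + l)) (j : Fin e),
      Φ i j = if (j : ℕ) = (i : ℕ) then truncX k m ^ w (i : ℕ) else 0 := by
    intro i j
    rw [hΦ i j]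
    by_cases hij : (j : ℕ) = (i : ℕ)
    · by_cases hia : (i : ℕ) < a <;> simp [hij, hia, hw]
    · simp [hij]
  -- monotonicity of w below a + l
  have hwmono : ∀ i j : ℕ, i ≤ j → j < a + l → w i ≤ w j := by
    intro i j hij hj
    by_cases hja : j < a
    · have hia : i < a := lt_of_le_of_lt hij hja
      simp [hw, hia, hja]
    · by_cases hia : i < a
      · simp [hw, hia, hja]
      · simp only [hw, if_neg hia, if_neg hja]
        exact hmono (i - a + 1) (j - a + 1) (by omega) (by omega) (by omega)
  -- the sum of the first s values of w
  have hsum : ∑ t ∈ Finset.range s, w t = ∑ i ∈ Finset.Icc 1 (l - r), lam i := by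
    have hq : s = a + (l - r) := by omega
    rw [hq, Finset.range_eq_Ico,
      ← Finset.sum_Ico_consecutive _ (Nat.zero_le a) (Nat.le_add_right a (l - r))]
    have h1 : ∑ t ∈ Finset.Ico 0 a, w t = 0 := by
      apply Finset.sum_eq_zero
      intro t ht
      simp only [Finset.mem_Ico] at ht
      simp [hw, ht.2]
    rw [h1, zero_add, Finset.sum_Ico_eq_sum_range]
    have h2 : a + (l - r) - a = l - r := by omega
    rw [h2, ← Finset.Ico_add_one_right_eq_Icc, Finset.sum_Ico_eq_sum_range]
    have h3 : l - r + 1 - 1 = l - r := by omega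
    rw [h3]
    apply Finset.sum_congr rfl
    intro i _
    simp only [hw]
    rw [if_neg (by omega)]
    congr 1
    omega
  -- diagonal case: the minor is a power of x
  have hdiag : ∀ (ρ : Fin s → Fin (a + l)) (σ : Fin s → Fin e),
      StrictMono σ → (∀ t, (σ t : ℕ) = (ρ t : ℕ)) →
      (Φ.submatrix ρ σ).det = truncX k m ^ (∑ t : Fin s, w (ρ t : ℕ)) := by
    intro ρ σ hσ hts
    have : Φ.submatrix ρ σ = Matrix.diagonal (fun t => truncX k m ^ w (ρ t : ℕ)) := by
      funext t u
      rw [Matrix.submatrix_apply, hentry]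
      by_cases htu : t = u
      · subst htu
        simp [hts t, Matrix.diagonal]
      · have h1 : (σ u : ℕ) ≠ (ρ t : ℕ) := by
          rw [← hts t]
          intro hcon
          exact htu (hσ.injective (Fin.ext hcon)).symm
        simp [h1, Matrix.diagonal_apply_ne' _ (fun hc => htu hc.symm), htu]
    rw [this, Matrix.det_diagonal, Finset.prod_pow_eq_pow_sum]
  -- mismatched case: the minor vanishes
  have hzero : ∀ (ρ : Fin s → Fin (a + l)) (σ : Fin s → Fin e),
      StrictMono ρ → StrictMono σ → (¬ ∀ t, (σ t : ℕ) = (ρ t : ℕ)) →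
      (Φ.submatrix ρ σ).det = 0 := by
    intro ρ σ hρ hσ hts
    have hrow : ∃ t₀ : Fin s, ∀ u : Fin s, (σ u : ℕ) ≠ (ρ t₀ : ℕ) := by
      by_contra hcon
      push_neg at hcon
      choose u hu using hcon
      have humono : StrictMono u := by
        intro t t' htt
        have h1 : (σ (u t) : ℕ) < (σ (u t') : ℕ) := by
          rw [hu t, hu t']
          exact hρ htt
        exact hσ.lt_iff_lt.mp (Fin.lt_def.mpr h1)
      have := fin_strictMono_id humono
      apply hts
      intro t
      have := congrFun this t
      rw [← hu t, this]
      rfl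
    obtain ⟨t₀, ht₀⟩ := hrow
    apply Matrix.det_eq_zero_of_row_eq_zero t₀
    intro u
    rw [Matrix.submatrix_apply, hentry]
    simp [ht₀ u]
  constructor
  · -- all minors vanish → sum large
    intro H
    have hsle : s ≤ a + l := by omega
    have hsle' : s ≤ e := by omega
    set ρ : Fin s → Fin (a + l) := Fin.castLE hsle with hρdef
    set σ : Fin s → Fin e := Fin.castLE hsle' with hσdef
    have hρ : StrictMono ρ := Fin.strictMono_castLE hsle
    have hσ : StrictMono σ := Fin.strictMono_castLE hsle'
    have hdet := H ρ σ hρ hσ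
    rw [hdiag ρ σ hσ (fun t => rfl)] at hdet
    rw [truncX_pow_eq_zero_iff] at hdet
    have heq : ∑ t : Fin s, w (ρ t : ℕ) = ∑ t ∈ Finset.range s, w t := by
      rw [← Fin.sum_univ_eq_sum_range]
      rfl
    rw [heq, hsum] at hdet
    exact hdet
  · -- sum large → all minors vanish
    intro H ρ σ hρ hσ
    by_cases hcase : ∀ t, (σ t : ℕ) = (ρ t : ℕ)
    · rw [hdiag ρ σ hσ hcase, truncX_pow_eq_zero_iff]
      calc m + 1 ≤ ∑ i ∈ Finset.Icc 1 (l - r), lam i := H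
        _ = ∑ t ∈ Finset.range s, w t := hsum.symm
        _ = ∑ t : Fin s, w (t : ℕ) := (Fin.sum_univ_eq_sum_range _ _).symm
        _ ≤ ∑ t : Fin s, w (ρ t : ℕ) := by
            apply Finset.sum_le_sum
            intro t _
            exact hwmono _ _ (fin_strictMono_le hρ t) (ρ t).isLt
    · exact hzero ρ σ hρ hσ hcase
end

section
/- Let A be a commutative ring and let φ : M → N be an A-linear map between finite free A-modules. For a prime ideal p of A, let κ(p) denote the residue field of the localization A_p, and let φ⊗κ(p) : M ⊗_A κ(p) → N ⊗_A κ(p) be the map obtained from φ by base change to κ(p). Then the set { p ∈ Spec A : φ⊗κ(p) is injective } is an open subset of Spec A with the Zariski topology. -/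
open Matrix

lemma key_field_aux_residue {K ι κ : Type*} [Field K] [Fintype ι] [Fintype κ] [DecidableEq ι]
    (Φ : Matrix κ ι K) :
    Function.Injective Φ.mulVec ↔
      ∃ g : ι → κ, Function.Injective g ∧ (Φ.submatrix g id).det ≠ 0 := by
  classical
  constructor
  · intro hinj
    have hcols : LinearIndependent K (fun i ↦ Φᵀ i) :=
      (Matrix.mulVec_injective_iff (M := Φ)).mp hinj
    have hrank : Φ.rank = Fintype.card ι := by
      rw [← Matrix.rank_transpose]; exact hcols.rank_matrix
    have hspan : Module.finrank K (Submodule.span K (Set.range Φ)) = Fintype.card ι := by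
      exact (Matrix.rank_eq_finrank_span_row Φ).symm.trans hrank
    obtain ⟨t, hts, htspan, htind⟩ := exists_linearIndependent K (Set.range Φ)
    have htfin : t.Finite := (Set.finite_range Φ).subset hts
    haveI := htfin.fintype
    have hcard : Fintype.card t = Fintype.card ι := by
      have := finrank_span_set_eq_card htind
      rw [htspan, hspan] at this
      rw [Set.toFinset_card] at this
      omega
    obtain e := (Fintype.equivOfCardEq hcard).symm
    have hchoose : ∀ i : ι, Φ ((hts (e i).2).choose) = ((e i : t) : ι → K) :=
      fun i => (hts (e i).2).choose_spec
    refine ⟨fun i => (hts (e i).2).choose, ?_, ?_⟩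
    · intro i j hij
      have hij' : (hts (e i).2).choose = (hts (e j).2).choose := hij
      have : (e i : ι → K) = (e j : ι → K) := by
        rw [← hchoose i, ← hchoose j, hij']
      exact e.injective (Subtype.ext this)
    · have hrows : LinearIndependent K
          (fun i => (Φ.submatrix (fun i => (hts (e i).2).choose) id) i) := by
        have : (fun i => (Φ.submatrix (fun i => (hts (e i).2).choose) id) i)
            = (fun x : t => (x : ι → K)) ∘ e := by
          funext i; ext j
          have := congr_fun (hchoose i) j
          simpa [Matrix.submatrix] using this
        rw [this]
        exact htind.comp e e.injective
      have := Matrix.linearIndependent_rows_iff_isUnit.mp hrows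
      exact ((Matrix.isUnit_iff_isUnit_det _).mp this).ne_zero
  · rintro ⟨g, hg, hdet⟩
    intro x y hxy
    have hsub : Function.Injective (Φ.submatrix g id).mulVec :=
      Matrix.mulVec_injective_iff_isUnit.mpr ((Matrix.isUnit_iff_isUnit_det _).mpr
        (isUnit_iff_ne_zero.mpr hdet))
    apply hsub
    ext i
    have := congr_fun hxy (g i)
    simpa [Matrix.mulVec, Matrix.submatrix, dotProduct] using this

lemma inj_iff_matrix_aux_residue {R M' N' ι κ : Type*} [CommRing R] [AddCommGroup M']
    [Module R M'] [AddCommGroup N'] [Module R N'] [Fintype ι] [Fintype κ] [DecidableEq ι]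
    (b : Module.Basis ι R M') (c : Module.Basis κ R N') (f : M' →ₗ[R] N') :
    Function.Injective f ↔ Function.Injective (LinearMap.toMatrix b c f).mulVec := by
  have hfun : (LinearMap.toMatrix b c f).mulVec = ⇑c.equivFun ∘ ⇑f ∘ ⇑b.equivFun.symm := by
    funext v
    have h1 := LinearMap.toMatrix_mulVec_repr b c f (b.equivFun.symm v)
    have h2 : (⇑(b.repr (b.equivFun.symm v)) : ι → R) = v := b.equivFun.apply_symm_apply v
    rw [h2] at h1
    exact h1
  rw [hfun]
  constructor
  · intro hf
    exact c.equivFun.injective.comp (hf.comp b.equivFun.symm.injective)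
  · intro h x y hxy
    have : (⇑c.equivFun ∘ ⇑f ∘ ⇑b.equivFun.symm) (b.equivFun x)
        = (⇑c.equivFun ∘ ⇑f ∘ ⇑b.equivFun.symm) (b.equivFun y) := by
      simp only [Function.comp_apply, LinearEquiv.symm_apply_apply, hxy]
    exact b.equivFun.injective (h this)

lemma algebraMap_residue_eq_zero_iff_aux {A : Type*} [CommRing A] (p : PrimeSpectrum A) (a : A) :
    algebraMap A (IsLocalRing.ResidueField (Localization.AtPrime p.asIdeal)) a = 0 ↔
      a ∈ p.asIdeal := by
  rw [IsScalarTower.algebraMap_apply A (Localization.AtPrime p.asIdeal),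
    IsLocalRing.ResidueField.algebraMap_eq, IsLocalRing.residue_eq_zero_iff]
  exact IsLocalization.AtPrime.to_map_mem_maximal_iff _ p.asIdeal a

/-- Let `φ : M → N` be a homomorphism of finite free modules over a commutative ring `A`.
Then the locus of primes `p` of `A` such that the base change of `φ` to the residue field
`κ(p)` (the residue field of the localization `A_p`) is injective is open in `Spec A` with
the Zariski topology. -/
theorem isOpen_injective_residue_locus (A : Type*) [CommRing A]
    (M N : Type*) [AddCommGroup M] [Module A M] [Module.Free A M] [Module.Finite A M]
    [AddCommGroup N] [Module A N] [Module.Free A N] [Module.Finite A N]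
    (φ : M →ₗ[A] N) :
    IsOpen {p : PrimeSpectrum A | Function.Injective
      (LinearMap.baseChange (IsLocalRing.ResidueField (Localization.AtPrime p.asIdeal)) φ)} := by
  classical
  set b := Module.Free.chooseBasis A M with hb
  set c := Module.Free.chooseBasis A N with hc
  set Φ := LinearMap.toMatrix b c φ with hΦ
  have hset : {p : PrimeSpectrum A | Function.Injective
      (LinearMap.baseChange (IsLocalRing.ResidueField (Localization.AtPrime p.asIdeal)) φ)}
      = ⋃ (g : Module.Free.ChooseBasisIndex A M → Module.Free.ChooseBasisIndex A N)
          (_ : Function.Injective g),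
          (PrimeSpectrum.basicOpen ((Φ.submatrix g id).det) : Set (PrimeSpectrum A)) := by
    ext p
    set K := IsLocalRing.ResidueField (Localization.AtPrime p.asIdeal) with hK
    simp only [Set.mem_setOf_eq, Set.mem_iUnion, SetLike.mem_coe, PrimeSpectrum.mem_basicOpen]
    rw [inj_iff_matrix_aux_residue (Algebra.TensorProduct.basis K b)
        (Algebra.TensorProduct.basis K c), LinearMap.toMatrix_baseChange,
      key_field_aux_residue]
    constructor <;> rintro ⟨g, hg, h⟩ <;> refine ⟨g, hg, ?_⟩
    · intro hmem
      apply h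
      have : (Φ.map (algebraMap A K)).submatrix g id = (Φ.submatrix g id).map (algebraMap A K) :=
        rfl
      rw [this, ← RingHom.mapMatrix_apply, ← RingHom.map_det]
      exact (algebraMap_residue_eq_zero_iff_aux p _).mpr hmem
    · intro h0
      apply h
      have : (Φ.map (algebraMap A K)).submatrix g id = (Φ.submatrix g id).map (algebraMap A K) :=
        rfl
      rw [this, ← RingHom.mapMatrix_apply, ← RingHom.map_det] at h0
      exact (algebraMap_residue_eq_zero_iff_aux p _).mp h0
  rw [hset]
  exact isOpen_iUnion fun g => isOpen_iUnion fun _ => (PrimeSpectrum.basicOpen _).2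
end
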